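/- arXiv:1508.07936 — 3 statements merged into one kernel-verified Lean document; each statement's English description precedes it below -/
import Mathlib

section
/- For every p ≥ 0: K^p = Σ_{i+j=p} K_{i,j}, where K_{i,j} ⊆ D denotes the additive span of the pure tensors x ⊗ y with x ∈ I^i and y ∈ J^j (each K_{i,j} is in fact an ideal of D, the image of I^i ⊗_A J^j in D). This is the abstract form of the paper's claim that the I-adic filtration F^p on the Čech nerve A^{⊗(m+1)} is generated under the Alexander–Whitney cup product by the filtration on A^{⊗2}: F^p A^{⊗(m+1)} = Σ_{p_1+⋯+p_m=p} F^{p_1}A^{⊗2} ⌣ ⋯ ⌣ F^{p_m}A^{⊗2}. -/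
open TensorProduct

section Aux

variable {A B C : Type*} [CommRing A] [CommRing B] [CommRing C] [Algebra A B] [Algebra A C]
variable (f : B →ₐ[A] A) (g : C →ₐ[A] A)

/-- The set of pure tensors `x ⊗ y` with `x ∈ I^i`, `y ∈ J^j`. -/
def genSet (i j : ℕ) : Set (B ⊗[A] C) :=
  {z : B ⊗[A] C | ∃ x ∈ (RingHom.ker f.toRingHom) ^ i,
    ∃ y ∈ (RingHom.ker g.toRingHom) ^ j, z = x ⊗ₜ[A] y}

lemma mul_mem_closure_genSet {i j : ℕ} (d : B ⊗[A] C) {z : B ⊗[A] C}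
    (hz : z ∈ AddSubgroup.closure (genSet f g i j)) :
    d * z ∈ AddSubgroup.closure (genSet f g i j) := by
  induction hz using AddSubgroup.closure_induction with
  | mem w hw =>
    obtain ⟨x, hx, y, hy, rfl⟩ := hw
    induction d using TensorProduct.induction_on with
    | zero => simpa using AddSubgroup.zero_mem _
    | tmul b c =>
      rw [Algebra.TensorProduct.tmul_mul_tmul]
      exact AddSubgroup.subset_closure
        ⟨b * x, Ideal.mul_mem_left _ _ hx, c * y, Ideal.mul_mem_left _ _ hy, rfl⟩
    | add d₁ d₂ h₁ h₂ =>
      rw [add_mul]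
      exact AddSubgroup.add_mem _ h₁ h₂
  | zero => simpa using AddSubgroup.zero_mem _
  | add w₁ w₂ _ _ h₁ h₂ =>
    rw [mul_add]
    exact AddSubgroup.add_mem _ h₁ h₂
  | neg w _ h =>
    rw [mul_neg]
    exact AddSubgroup.neg_mem _ h

/-- The additive closure of `genSet` coincides with the ideal span. -/
lemma closure_genSet_eq_span (i j : ℕ) :
    (AddSubgroup.closure (genSet f g i j) : Set (B ⊗[A] C)) =
      (Ideal.span (genSet f g i j) : Set (B ⊗[A] C)) := by
  apply le_antisymm
  · intro z hz
    exact (AddSubgroup.closure_le (Ideal.span (genSet f g i j)).toAddSubgroup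
      |>.mpr Ideal.subset_span) hz
  · intro z hz
    refine Submodule.span_induction (fun w hw => AddSubgroup.subset_closure hw)
      (AddSubgroup.zero_mem _) (fun _ _ _ _ h₁ h₂ => AddSubgroup.add_mem _ h₁ h₂)
      (fun d w _ hw => mul_mem_closure_genSet f g d hw) hz

/-- The candidate filtration: sum of the ideals spanned by `genSet i j`, `i + j = p`. -/
def Tfil (p : ℕ) : Ideal (B ⊗[A] C) :=
  ⨆ (ij : ℕ × ℕ) (_ : ij.1 + ij.2 = p), Ideal.span (genSet f g ij.1 ij.2)

lemma span_le_Tfil {i j p : ℕ} (h : i + j = p) :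
    Ideal.span (genSet f g i j) ≤ Tfil f g p := by
  have := le_iSup (fun ij : ℕ × ℕ => ⨆ (_ : ij.1 + ij.2 = p),
    Ideal.span (genSet f g ij.1 ij.2)) (i, j)
  exact le_trans (le_iSup (fun _ : i + j = p => Ideal.span (genSet f g i j)) h) this

lemma Tfil_mul_le (a b : ℕ) : Tfil f g a * Tfil f g b ≤ Tfil f g (a + b) := by
  rw [Tfil, Submodule.iSup_mul]
  refine iSup_le fun ij => ?_
  rw [Submodule.iSup_mul]
  refine iSup_le fun hij => ?_
  rw [Tfil, Submodule.mul_iSup]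
  refine iSup_le fun ij' => ?_
  rw [Submodule.mul_iSup]
  refine iSup_le fun hij' => ?_
  rw [Ideal.span_mul_span]
  refine le_trans (Ideal.span_le.mpr ?_) (span_le_Tfil f g (p := a + b)
    (i := ij.1 + ij'.1) (j := ij.2 + ij'.2) (by omega))
  intro w hw
  simp only [Set.mem_mul] at hw
  obtain ⟨s, hs, t, ht, rfl⟩ := hw
  obtain ⟨x, hx, y, hy, rfl⟩ := hs
  obtain ⟨x', hx', y', hy', rfl⟩ := ht
  rw [Algebra.TensorProduct.tmul_mul_tmul]
  have hxx : x * x' ∈ RingHom.ker f.toRingHom ^ (ij.1 + ij'.1) := by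
    rw [pow_add]; exact Ideal.mul_mem_mul hx hx'
  have hyy : y * y' ∈ RingHom.ker g.toRingHom ^ (ij.2 + ij'.2) := by
    rw [pow_add]; exact Ideal.mul_mem_mul hy hy'
  exact Ideal.subset_span ⟨x * x', hxx, y * y', hyy, rfl⟩

lemma Tfil_zero_eq_top : Tfil f g 0 = ⊤ := by
  rw [eq_top_iff]
  refine le_trans ?_ (span_le_Tfil f g (i := 0) (j := 0) rfl)
  rw [top_le_iff, Ideal.eq_top_iff_one]
  refine Ideal.subset_span ⟨1, ?_, 1, ?_, (Algebra.TensorProduct.one_def)⟩ <;>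
    · rw [pow_zero, Ideal.one_eq_top]; exact Submodule.mem_top

lemma exists_sub_tmul_mem (d : B ⊗[A] C) :
    ∃ c : C, d - (1 : B) ⊗ₜ[A] c ∈ Ideal.span (genSet f g 1 0) ∧
      Algebra.TensorProduct.productMap f g d = g c := by
  induction d using TensorProduct.induction_on with
  | zero => exact ⟨0, by simp⟩
  | tmul b c =>
    refine ⟨f b • c, ?_, ?_⟩
    · have key : b ⊗ₜ[A] c - (1 : B) ⊗ₜ[A] (f b • c)
          = (b - algebraMap A B (f b)) ⊗ₜ[A] c := by
        rw [TensorProduct.sub_tmul, Algebra.algebraMap_eq_smul_one,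
          TensorProduct.smul_tmul]
      rw [key]
      refine Ideal.subset_span ⟨b - algebraMap A B (f b), ?_, c, by rw [pow_zero, Ideal.one_eq_top]; exact Submodule.mem_top, rfl⟩
      rw [pow_one, RingHom.mem_ker]
      simp
    · simp [Algebra.TensorProduct.productMap_apply_tmul, Algebra.smul_def, mul_comm]
  | add d₁ d₂ h₁ h₂ =>
    obtain ⟨c₁, hc₁, hg₁⟩ := h₁
    obtain ⟨c₂, hc₂, hg₂⟩ := h₂
    refine ⟨c₁ + c₂, ?_, by simp [hg₁, hg₂]⟩
    have : d₁ + d₂ - (1 : B) ⊗ₜ[A] (c₁ + c₂)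
        = (d₁ - (1 : B) ⊗ₜ[A] c₁) + (d₂ - (1 : B) ⊗ₜ[A] c₂) := by
      rw [TensorProduct.tmul_add]; ring
    rw [this]
    exact Ideal.add_mem _ hc₁ hc₂

lemma ker_le_Tfil_one :
    RingHom.ker (Algebra.TensorProduct.productMap f g).toRingHom ≤ Tfil f g 1 := by
  intro d hd
  obtain ⟨c, hc, hg⟩ := exists_sub_tmul_mem f g d
  rw [RingHom.mem_ker] at hd
  have hgc : c ∈ RingHom.ker g.toRingHom := by
    rw [RingHom.mem_ker]
    show g c = 0
    rw [← hg]; exact hd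
  have h1 : (1 : B) ⊗ₜ[A] c ∈ Ideal.span (genSet f g 0 1) :=
    Ideal.subset_span ⟨1, by rw [pow_zero, Ideal.one_eq_top]; exact Submodule.mem_top, c, by rwa [pow_one], rfl⟩
  have : d = (d - (1 : B) ⊗ₜ[A] c) + (1 : B) ⊗ₜ[A] c := by ring
  rw [this]
  exact Ideal.add_mem _ (span_le_Tfil f g (i := 1) (j := 0) rfl hc)
    (span_le_Tfil f g (i := 0) (j := 1) rfl h1)

theorem pow_ker_eq_Tfil (p : ℕ) :
    RingHom.ker (Algebra.TensorProduct.productMap f g).toRingHom ^ p = Tfil f g p := by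
  set K := RingHom.ker (Algebra.TensorProduct.productMap f g).toRingHom with hK
  apply le_antisymm
  · induction p with
    | zero => rw [pow_zero, Ideal.one_eq_top, Tfil_zero_eq_top]
    | succ n ih =>
      calc K ^ (n + 1) = K ^ n * K := pow_succ K n
        _ ≤ Tfil f g n * Tfil f g 1 := Ideal.mul_mono ih (ker_le_Tfil_one f g)
        _ ≤ Tfil f g (n + 1) := Tfil_mul_le f g n 1
  · refine iSup_le fun ij => iSup_le fun hij => Ideal.span_le.mpr ?_
    rintro _ ⟨x, hx, y, hy, rfl⟩
    have hxK : x ⊗ₜ[A] (1 : C) ∈ K ^ ij.1 := by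
      have hmap : Ideal.map (Algebra.TensorProduct.includeLeft (S := A) :
          B →ₐ[A] B ⊗[A] C).toRingHom (RingHom.ker f.toRingHom ^ ij.1)
          ≤ K ^ ij.1 := by
        rw [Ideal.map_pow]
        refine Ideal.pow_right_mono ?_ _
        rw [Ideal.map_le_iff_le_comap]
        intro b hb
        rw [RingHom.mem_ker] at hb
        have hb' : f b = 0 := hb
        rw [Ideal.mem_comap, hK, RingHom.mem_ker]
        show Algebra.TensorProduct.productMap f g (b ⊗ₜ[A] (1 : C)) = 0
        simp [hb']
      exact hmap (Ideal.mem_map_of_mem _ hx)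
    have hyK : (1 : B) ⊗ₜ[A] y ∈ K ^ ij.2 := by
      have hmap : Ideal.map (Algebra.TensorProduct.includeRight :
          C →ₐ[A] B ⊗[A] C).toRingHom (RingHom.ker g.toRingHom ^ ij.2)
          ≤ K ^ ij.2 := by
        rw [Ideal.map_pow]
        refine Ideal.pow_right_mono ?_ _
        rw [Ideal.map_le_iff_le_comap]
        intro c hc
        rw [RingHom.mem_ker] at hc
        have hc' : g c = 0 := hc
        rw [Ideal.mem_comap, hK, RingHom.mem_ker]
        show Algebra.TensorProduct.productMap f g ((1 : B) ⊗ₜ[A] c) = 0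
        simp [hc']
      exact hmap (Ideal.mem_map_of_mem _ hy)
    have : x ⊗ₜ[A] y = (x ⊗ₜ[A] (1 : C)) * ((1 : B) ⊗ₜ[A] y) := by
      rw [Algebra.TensorProduct.tmul_mul_tmul, mul_one, one_mul]
    rw [this, ← hij, pow_add]
    exact Ideal.mul_mem_mul hxK hyK

end Aux

/-- let `B`, `C` be commutative `A`-algebras with augmentations
`f : B → A`, `g : C → A`, `I = ker f`, `J = ker g`, `D = B ⊗[A] C` and
`K = ker (h : D → A)` for the induced augmentation `h(b ⊗ c) = f b * g c`.
Then for every `p`, the `p`-th power of `K` is the sum over `i + j = p` of the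
ideals `K_{i,j}`, where `K_{i,j}` is the additive span of the pure tensors
`x ⊗ y` with `x ∈ I^i`, `y ∈ J^j`. -/
theorem pow_ker_tensor_eq_sum_spans {A B C : Type*}
    [CommRing A] [CommRing B] [CommRing C] [Algebra A B] [Algebra A C]
    (f : B →ₐ[A] A) (g : C →ₐ[A] A) (p : ℕ) :
    ((RingHom.ker (Algebra.TensorProduct.productMap f g).toRingHom ^ p : Ideal (B ⊗[A] C)) :
        Set (B ⊗[A] C)) =
      ↑(⨆ (ij : ℕ × ℕ) (_ : ij.1 + ij.2 = p),
        AddSubgroup.closure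
          {z : B ⊗[A] C | ∃ x ∈ (RingHom.ker f.toRingHom) ^ ij.1,
            ∃ y ∈ (RingHom.ker g.toRingHom) ^ ij.2, z = x ⊗ₜ[A] y}) := by
  rw [pow_ker_eq_Tfil]
  ext z
  constructor
  · intro hz
    rw [Tfil, iSup_subtype'] at hz
    refine Submodule.iSup_induction (x := z) _ hz (fun s w hw => ?_) (AddSubgroup.zero_mem _)
      (fun _ _ h₁ h₂ => AddSubgroup.add_mem _ h₁ h₂)
    have hw' : w ∈ AddSubgroup.closure (genSet f g s.1.1 s.1.2) := by
      rw [SetLike.mem_coe.symm, closure_genSet_eq_span]; exact hw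
    have hle : AddSubgroup.closure (genSet f g s.1.1 s.1.2) ≤
        ⨆ (ij : ℕ × ℕ) (_ : ij.1 + ij.2 = p), AddSubgroup.closure (genSet f g ij.1 ij.2) :=
      le_trans (le_iSup (fun _ : s.1.1 + s.1.2 = p =>
        AddSubgroup.closure (genSet f g s.1.1 s.1.2)) s.2)
        (le_iSup (fun ij : ℕ × ℕ => ⨆ (_ : ij.1 + ij.2 = p),
          AddSubgroup.closure (genSet f g ij.1 ij.2)) s.1)
    exact hle hw'
  · intro hz
    have hle : (⨆ (ij : ℕ × ℕ) (_ : ij.1 + ij.2 = p),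
        AddSubgroup.closure (genSet f g ij.1 ij.2)) ≤ (Tfil f g p).toAddSubgroup := by
      refine iSup_le fun ij => iSup_le fun hij => ?_
      refine (AddSubgroup.closure_le _).mpr ?_
      intro w hw
      exact span_le_Tfil f g hij (Ideal.subset_span hw)
    exact hle hz
end

section
/- For every Δ ∈ B, every m ≥ 1 and every p ≥ 0, the map μ_m(−,Δ) sends the p-th power of the augmentation ideal I_m ⊆ A^{⊗(m+1)} into the p-th filtration step: μ_m(I_m^p, Δ) ⊆ Fil^p. (This is the ungraded content of the paper's Lemma asserting that μ(−,Δ) : (DR'(A), F^•) → (B, Fil^•) is a filtered morphism.) -/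
open scoped TensorProduct
open PiTensorProduct

section Mu

variable (R A B : Type*) [CommRing R] [CommRing A] [Algebra R A]
  [Ring B] [Algebra R B]

/-- The map `μ_m(−,Δ)`, determined on pure tensors by
`a_0 ⊗ a_1 ⊗ ⋯ ⊗ a_m ↦ φ(a_0)·Δ·φ(a_1)·Δ⋯Δ·φ(a_m)`. -/
noncomputable def muMap (φ : A →ₐ[R] B) (Δ : B) (m : ℕ) :
    (⨂[R] _ : Fin (m + 1), A) →ₗ[R] B :=
  PiTensorProduct.lift
    ((MultilinearMap.mkPiAlgebraFin R (m + 1) B).compLinearMap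
      (fun i => (LinearMap.mulRight R (if (i : ℕ) < m then Δ else 1)).comp φ.toLinearMap))

/-- The map `ν_m(−,Δ,ρ)`, determined on pure tensors by
`a_0 ⊗ ⋯ ⊗ a_m ↦ Σ_{i=0}^{m−1} φ(a_0)Δ⋯Δφ(a_i)·ρ·φ(a_{i+1})Δ⋯Δφ(a_m)`. -/
noncomputable def nuMap (φ : A →ₐ[R] B) (Δ ρ : B) (m : ℕ) :
    (⨂[R] _ : Fin (m + 1), A) →ₗ[R] B :=
  ∑ i ∈ Finset.range m,
    PiTensorProduct.lift
      ((MultilinearMap.mkPiAlgebraFin R (m + 1) B).compLinearMap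
        (fun j => (LinearMap.mulRight R
          (if (j : ℕ) = i then ρ else if (j : ℕ) < m then Δ else 1)).comp φ.toLinearMap))

/-- The augmentation ideal `I_m`, the kernel of the total multiplication map
`A^{⊗(m+1)} → A`. -/
noncomputable def augIdeal (m : ℕ) : Ideal (⨂[R] _ : Fin (m + 1), A) :=
  RingHom.ker (PiTensorProduct.liftAlgHom
    (MultilinearMap.mkPiAlgebra R (Fin (m + 1)) A)
    (by simp) (by intro x y; simp [Finset.prod_mul_distrib])).toRingHom

end Mu

namespace MuProofAux

open TrivSqZeroExt

/-! ### A key computation in trivial square-zero extensions -/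

section KeyList

variable {B : Type*} [Ring B]

/-- `mkE x y` is the element `x + y ε` of the dual numbers, built without
unfolding `TrivSqZeroExt` to a product type. -/
noncomputable def mkE (x y : B) : TrivSqZeroExt B B := inl x + inr y

lemma fst_mkE (x y : B) : TrivSqZeroExt.fst (mkE x y) = x := by simp [mkE]

lemma snd_mkE (x y : B) : TrivSqZeroExt.snd (mkE x y) = y := by simp [mkE]

lemma mkE_zero (x : B) : mkE x 0 = inl x := by simp [mkE]

lemma inl_mul_mkE (x y z : B) :
    (inl x : TrivSqZeroExt B B) * mkE y z = mkE (x * y) (x * z) := by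
  rw [mkE, mkE, mul_add, ← TrivSqZeroExt.inl_mul (M := B) x y,
    TrivSqZeroExt.inl_mul_inr, smul_eq_mul]

lemma prod_inl_ofFn {n : ℕ} (f : Fin n → B) :
    (List.ofFn fun k => (TrivSqZeroExt.inl (f k) : TrivSqZeroExt B B)).prod
      = TrivSqZeroExt.inl ((List.ofFn f).prod) := by
  have := map_list_prod ((TrivSqZeroExt.inlHom B B).toMonoidHom) (List.ofFn f)
  simpa [List.map_ofFn, Function.comp_def] using this.symm

/-- The key identity: inserting `c` at position `i` of the product
`b₀d₀ b₁d₁ ⋯` minus multiplying by `c` in front is computed by the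
`ε`-component of a product of dual numbers whose `ε`-components are
commutators. -/
lemma key_list (c : B) :
    ∀ (n : ℕ) (i : ℕ), i < n → ∀ (b d : Fin n → B), (∀ k, c * b k = b k * c) →
    TrivSqZeroExt.snd (List.ofFn fun k : Fin n =>
        mkE (b k * d k) (b k * (if (k : ℕ) < i then d k * c - c * d k else 0))).prod
      = (List.ofFn fun k : Fin n => (if (k : ℕ) = i then c * b k else b k) * d k).prod
        - c * (List.ofFn fun k : Fin n => b k * d k).prod := by
  intro n
  induction n with
  | zero => intro i hi; omega
  | succ n ih =>
    intro i hi b d hb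
    match i with
    | 0 =>
      have h1 : (List.ofFn fun k : Fin (n+1) =>
          mkE (b k * d k) (b k * (if (k : ℕ) < 0 then d k * c - c * d k else 0)))
          = List.ofFn fun k : Fin (n+1) =>
            (TrivSqZeroExt.inl (b k * d k) : TrivSqZeroExt B B) := by
        congr 1; funext k
        rw [if_neg (Nat.not_lt_zero _), mul_zero, mkE_zero]
      rw [h1, prod_inl_ofFn (fun k : Fin (n+1) => b k * d k), TrivSqZeroExt.snd_inl]
      rw [List.ofFn_succ (f := fun k : Fin (n+1) => (if (k : ℕ) = 0 then c * b k else b k) * d k),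
        List.ofFn_succ (f := fun k : Fin (n+1) => b k * d k), List.prod_cons, List.prod_cons]
      have h2 : ∀ k : Fin n, (((k.succ : Fin (n+1)) : ℕ) = 0) = False :=
        fun k => eq_false (by simp)
      have h3 : (((0 : Fin (n+1)) : ℕ) = 0) = True := eq_true rfl
      simp only [h2, h3, if_true, if_false]
      rw [mul_assoc c (b 0) (d 0), mul_assoc c (b 0 * d 0) _]
      exact (sub_self _).symm
    | (i' + 1) =>
      have hi' : i' < n := by omega
      rw [List.ofFn_succ (f := fun k : Fin (n+1) =>
          mkE (b k * d k) (b k * (if (k : ℕ) < i' + 1 then d k * c - c * d k else 0))),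
        List.ofFn_succ (f := fun k : Fin (n+1) => (if (k : ℕ) = i' + 1 then c * b k else b k) * d k),
        List.ofFn_succ (f := fun k : Fin (n+1) => b k * d k),
        List.prod_cons, List.prod_cons, List.prod_cons]
      simp only [Fin.val_succ]
      rw [if_pos (by simp : ((0 : Fin (n+1)) : ℕ) < i' + 1),
        if_neg (by simp : ¬ ((0 : Fin (n+1)) : ℕ) = i' + 1)]
      have hsucclt : ∀ k : Fin n, (((k : ℕ) + 1 < i' + 1)) = ((k : ℕ) < i') := by
        intro k; simp
      have hsucceq : ∀ k : Fin n, (((k : ℕ) + 1 = i' + 1)) = ((k : ℕ) = i') := by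
        intro k; simp
      simp only [hsucclt, hsucceq]
      rw [TrivSqZeroExt.snd_mul]
      rw [ih i' hi' (fun k => b k.succ) (fun k => d k.succ) (fun k => hb k.succ)]
      have hTfst : TrivSqZeroExt.fst (List.ofFn fun k : Fin n =>
          mkE (b k.succ * d k.succ)
            (b k.succ * (if (k : ℕ) < i' then d k.succ * c - c * d k.succ else 0))).prod
          = (List.ofFn fun k : Fin n => b k.succ * d k.succ).prod := by
        rw [TrivSqZeroExt.fst_list_prod, List.map_ofFn]
        exact congrArg List.prod (congrArg List.ofFn (funext fun k => fst_mkE _ _))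
      rw [hTfst, fst_mkE, snd_mkE]
      simp only [smul_eq_mul, op_smul_eq_mul]
      simp only [mul_sub, sub_mul, mul_assoc]
      rw [← mul_assoc (b 0) c, ← hb 0, mul_assoc]
      abel

end KeyList

/-! ### Tensor-product infrastructure -/

variable {R A : Type*} [CommRing R] [CommRing A] [Algebra R A]

variable (R) in
/-- The `μ`-map with gap-dependent `Δ`s. -/
noncomputable def mugen {B : Type*} [Ring B] [Algebra R B] (φ : A →ₐ[R] B) {m : ℕ}
    (Δ : Fin m → B) : (⨂[R] _ : Fin (m + 1), A) →ₗ[R] B :=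
  PiTensorProduct.lift
    ((MultilinearMap.mkPiAlgebraFin R (m + 1) B).compLinearMap
      (fun i => (LinearMap.mulRight R
        (if h : (i : ℕ) < m then Δ ⟨(i : ℕ), h⟩ else 1)).comp φ.toLinearMap))

lemma mugen_tprod {B : Type*} [Ring B] [Algebra R B] (φ : A →ₐ[R] B) {m : ℕ}
    (Δ : Fin m → B) (t : Fin (m + 1) → A) :
    mugen R φ Δ (tprod R t)
      = (List.ofFn fun k : Fin (m + 1) =>
          φ (t k) * (if h : (k : ℕ) < m then Δ ⟨(k : ℕ), h⟩ else 1)).prod := by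
  simp [mugen, MultilinearMap.mkPiAlgebraFin_apply]

variable (R A) in
/-- The element `1 ⊗ ⋯ ⊗ a ⊗ ⋯ ⊗ 1` with `a` in slot `i`. -/
noncomputable def el {m : ℕ} (i : Fin (m + 1)) (a : A) : (⨂[R] _ : Fin (m + 1), A) :=
  PiTensorProduct.singleAlgHom (R := R) (A := fun _ : Fin (m+1) => A) i a

lemma el_def {m : ℕ} (i : Fin (m + 1)) (a : A) :
    el R A i a = PiTensorProduct.tprod R (Pi.mulSingle i a) := by
  simp [el, PiTensorProduct.singleAlgHom_apply, MonoidHom.mulSingle]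
  rfl

lemma el_mul_tprod {m : ℕ} (i : Fin (m + 1)) (a : A) (t : Fin (m + 1) → A) :
    el R A i a * tprod R t = tprod R (Pi.mulSingle i a * t) := by
  rw [el_def, PiTensorProduct.tprod_mul_tprod]

variable (R A) in
/-- The total multiplication map, as an algebra homomorphism. -/
noncomputable def multAlg (m : ℕ) : (⨂[R] _ : Fin (m + 1), A) →ₐ[R] A :=
  PiTensorProduct.liftAlgHom
    (MultilinearMap.mkPiAlgebra R (Fin (m + 1)) A)
    (by simp) (by intro x y; simp [Finset.prod_mul_distrib])

lemma augIdeal_eq_ker (m : ℕ) :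
    augIdeal R A m = RingHom.ker (multAlg R A m).toRingHom := rfl

lemma multAlg_tprod (m : ℕ) (t : Fin (m + 1) → A) :
    multAlg R A m (tprod R t) = ∏ k, t k := by
  simp [multAlg, PiTensorProduct.liftAlgHom]

lemma multAlg_el (m : ℕ) (i : Fin (m + 1)) (a : A) :
    multAlg R A m (el R A i a) = a := by
  rw [el_def, multAlg_tprod]
  exact Fintype.prod_pi_mulSingle' i a

lemma tprod_eq_prod_el (m : ℕ) (t : Fin (m + 1) → A) :
    (tprod R t : ⨂[R] _ : Fin (m + 1), A) = ∏ k, el R A k (t k) := by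
  have h : t = ∏ k, Pi.mulSingle k (t k) := by
    funext j
    rw [Finset.prod_apply]
    exact (Fintype.prod_pi_mulSingle j t).symm
  conv_lhs => rw [h]
  rw [PiTensorProduct.tprod_prod]
  exact Finset.prod_congr rfl fun k _ => (el_def k (t k)).symm

variable (R A) in
/-- The generators `e_i(a) - e_0(a)` of the augmentation ideal. -/
noncomputable def genSet (m : ℕ) : Set (⨂[R] _ : Fin (m + 1), A) :=
  {x | ∃ (i : Fin (m + 1)) (a : A), x = el R A i a - el R A 0 a}

lemma augIdeal_eq_span (m : ℕ) :
    augIdeal R A m = Ideal.span (genSet R A m) := by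
  apply le_antisymm
  · intro x hx
    have hx' : multAlg R A m x = 0 := hx
    set J := Ideal.span (genSet R A m) with hJ
    have key : (Ideal.Quotient.mkₐ R J).toLinearMap
        = ((Ideal.Quotient.mkₐ R J).comp
            ((PiTensorProduct.singleAlgHom (R := R) (A := fun _ : Fin (m+1) => A) 0).comp
              (multAlg R A m))).toLinearMap := by
      apply PiTensorProduct.ext
      apply MultilinearMap.ext
      intro t
      simp only [LinearMap.compMultilinearMap_apply, AlgHom.toLinearMap_apply, AlgHom.coe_comp,
        Function.comp_apply]
      have h0 : (PiTensorProduct.singleAlgHom (R := R) (A := fun _ : Fin (m+1) => A) 0)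
          (multAlg R A m (tprod R t)) = el R A 0 (∏ k, t k) := by
        rw [multAlg_tprod]; rfl
      have h1 : el R A 0 (∏ k, t k) = ∏ k, el R A 0 (t k) :=
        map_prod (PiTensorProduct.singleAlgHom (R := R) (A := fun _ : Fin (m+1) => A) 0) _ _
      rw [h0, h1, tprod_eq_prod_el, map_prod, map_prod]
      refine Finset.prod_congr rfl fun k _ => ?_
      have hmem : el R A k (t k) - el R A 0 (t k) ∈ J :=
        Ideal.subset_span ⟨k, t k, rfl⟩
      simpa [Ideal.Quotient.mkₐ_eq_mk] using
        (Ideal.Quotient.mk_eq_mk_iff_sub_mem (I := J) (el R A k (t k)) (el R A 0 (t k))).mpr hmem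
    have hx2 : Ideal.Quotient.mk J x
        = Ideal.Quotient.mk J (el R A 0 (multAlg R A m x)) :=
      DFunLike.congr_fun key x
    rw [hx', ] at hx2
    have : el R A 0 (0 : A) = 0 :=
      map_zero (PiTensorProduct.singleAlgHom (R := R) (A := fun _ : Fin (m+1) => A) 0)
    rw [this, map_zero] at hx2
    exact (Ideal.Quotient.eq_zero_iff_mem).mp hx2
  · rw [Ideal.span_le]
    rintro x ⟨i, a, rfl⟩
    show multAlg R A m (el R A i a - el R A 0 a) = 0
    rw [map_sub, multAlg_el, multAlg_el, sub_self]

/-! ### The dual-number bootstrap -/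

section Dual

variable {B : Type*} [Ring B] [Algebra R B]

variable (R) in
/-- `snd` of the dual numbers as an `R`-linear map. -/
noncomputable def sndL : TrivSqZeroExt B B →ₗ[R] B where
  toFun := TrivSqZeroExt.snd
  map_add' := TrivSqZeroExt.snd_add
  map_smul' r x := TrivSqZeroExt.snd_smul r x

variable (R) in
noncomputable def phiD (φ : A →ₐ[R] B) : A →ₐ[R] TrivSqZeroExt B B :=
  (TrivSqZeroExt.inlAlgHom R B B).comp φ

/-- The twisted family of `Δ`s in the dual numbers. -/
noncomputable def deltaD {m : ℕ} (Δ : Fin m → B) (i : Fin (m + 1)) (c : B) :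
    Fin m → TrivSqZeroExt B B :=
  fun j => mkE (Δ j) (if (j : ℕ) < (i : ℕ) then Δ j * c - c * Δ j else 0)

lemma idKey (φ : A →ₐ[R] B) {m : ℕ} (Δ : Fin m → B) (i : Fin (m + 1)) (a : A)
    (z : ⨂[R] _ : Fin (m + 1), A) :
    TrivSqZeroExt.snd (mugen R (phiD R φ) (deltaD Δ i (φ a)) z)
      = mugen R φ Δ (el R A i a * z) - φ a * mugen R φ Δ z := by
  have main : (sndL R) ∘ₗ mugen R (phiD R φ) (deltaD Δ i (φ a))
      = mugen R φ Δ ∘ₗ LinearMap.mulLeft R (el R A i a)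
        - (LinearMap.mulLeft R (φ a)) ∘ₗ mugen R φ Δ := by
    apply PiTensorProduct.ext
    apply MultilinearMap.ext
    intro t
    simp only [LinearMap.compMultilinearMap_apply, LinearMap.coe_comp, Function.comp_apply,
      LinearMap.sub_apply, LinearMap.mulLeft_apply, sndL, LinearMap.coe_mk, AddHom.coe_mk]
    rw [el_mul_tprod, mugen_tprod, mugen_tprod, mugen_tprod]
    have hphi : ∀ k : Fin (m + 1), (phiD R φ) (t k) = inl (φ (t k)) := fun k => rfl
    have hent : (fun k : Fin (m + 1) => (phiD R φ) (t k) *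
          (if h : (k : ℕ) < m then deltaD Δ i (φ a) ⟨(k : ℕ), h⟩ else 1))
        = fun k : Fin (m + 1) =>
          mkE (φ (t k) * (if h : (k : ℕ) < m then Δ ⟨(k : ℕ), h⟩ else 1))
              (φ (t k) * (if (k : ℕ) < (i : ℕ)
                then (if h : (k : ℕ) < m then Δ ⟨(k : ℕ), h⟩ else 1) * φ a
                   - φ a * (if h : (k : ℕ) < m then Δ ⟨(k : ℕ), h⟩ else 1) else 0)) := by
      funext k
      by_cases h : (k : ℕ) < m
      · rw [dif_pos h, hphi k]
        simp only [deltaD]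
        rw [inl_mul_mkE]
        simp only [dif_pos h]
      · have hk : ¬ ((k : ℕ) < (i : ℕ)) := by
          have := i.isLt; have := k.isLt; omega
        rw [dif_neg h, hphi k, mul_one, ← mkE_zero]
        simp only [dif_neg h, if_neg hk, mul_zero, mul_one]
    have hb : ∀ k : Fin (m + 1), φ a * φ (t k) = φ (t k) * φ a := by
      intro k
      rw [← _root_.map_mul, ← _root_.map_mul, mul_comm]
    have hk := key_list (φ a) (m + 1) (i : ℕ) i.isLt (fun k => φ (t k))
      (fun k => if h : (k : ℕ) < m then Δ ⟨(k : ℕ), h⟩ else 1) hb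
    rw [hent, hk]
    congr 1
    refine congrArg List.prod (congrArg List.ofFn (funext fun k => ?_))
    congr 1
    have h2 : ((Pi.mulSingle i a : Fin (m + 1) → A) * t) k = (if k = i then a else 1) * t k := by
      rw [Pi.mul_apply, Pi.mulSingle_apply]
    rw [h2, _root_.map_mul]
    have h3 : φ (if k = i then a else 1) = if (k : ℕ) = (i : ℕ) then φ a else 1 := by
      rw [apply_ite φ, _root_.map_one]
      congr 1
      simp [Fin.ext_iff]
    rw [h3, ite_mul, one_mul]
  have := DFunLike.congr_fun main z
  simpa [sndL] using this

/-- The filtration on the dual numbers: `Fil q ⊕ Fil (q+1) ε`. -/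
noncomputable def filD (Fil : ℕ → Submodule R B) (q : ℕ) :
    Submodule R (TrivSqZeroExt B B) where
  carrier := {x | TrivSqZeroExt.fst x ∈ Fil q ∧ TrivSqZeroExt.snd x ∈ Fil (q + 1)}
  add_mem' := by
    rintro x y ⟨hx1, hx2⟩ ⟨hy1, hy2⟩
    exact ⟨by rw [TrivSqZeroExt.fst_add]; exact add_mem hx1 hy1,
      by rw [TrivSqZeroExt.snd_add]; exact add_mem hx2 hy2⟩
  zero_mem' := ⟨by rw [TrivSqZeroExt.fst_zero]; exact zero_mem _,
    by rw [TrivSqZeroExt.snd_zero]; exact zero_mem _⟩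
  smul_mem' := by
    rintro r x ⟨hx1, hx2⟩
    exact ⟨by rw [TrivSqZeroExt.fst_smul]; exact Submodule.smul_mem _ r hx1,
      by rw [TrivSqZeroExt.snd_smul]; exact Submodule.smul_mem _ r hx2⟩

lemma mem_filD {Fil : ℕ → Submodule R B} {q : ℕ} {x : TrivSqZeroExt B B} :
    x ∈ filD Fil q ↔ TrivSqZeroExt.fst x ∈ Fil q ∧ TrivSqZeroExt.snd x ∈ Fil (q + 1) :=
  Iff.rfl

end Dual

/-! ### The main induction -/

universe u

theorem aux (m : ℕ) (p : ℕ) :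
    ∀ {B : Type u} [Ring B] [Algebra R B] (Fil : ℕ → Submodule R B),
      (1 : B) ∈ Fil 0 →
      (∀ i j : ℕ, ∀ x y : B, x ∈ Fil i → y ∈ Fil j → x * y ∈ Fil (i + j)) →
      ∀ (φ : A →ₐ[R] B), (∀ a, φ a ∈ Fil 0) →
      (∀ (a : A) (q : ℕ), ∀ x ∈ Fil q, φ a * x - x * φ a ∈ Fil (q + 1)) →
      ∀ (Δ : Fin m → B), (∀ j, Δ j ∈ Fil 0) →
      ∀ x ∈ augIdeal R A m ^ p, mugen R φ Δ x ∈ Fil p := by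
  induction p with
  | zero =>
    intro B _ _ Fil h1 hmul φ hφ0 hφ Δ hΔ x hxmem
    clear hxmem
    have listmem : ∀ l : List B, (∀ b ∈ l, b ∈ Fil 0) → l.prod ∈ Fil 0 := by
      intro l
      induction l with
      | nil => intro _; simpa using h1
      | cons hd tl ihl =>
        intro hmem
        rw [List.prod_cons]
        exact hmul 0 0 _ _ (hmem hd List.mem_cons_self)
          (ihl fun b hb => hmem b (List.mem_cons_of_mem hd hb))
    induction x using PiTensorProduct.induction_on with
    | smul_tprod r f =>
      rw [map_smul]
      refine Submodule.smul_mem _ r ?_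
      rw [mugen_tprod]
      refine listmem _ ?_
      intro b hb
      rw [List.mem_ofFn] at hb
      obtain ⟨k, rfl⟩ := hb
      show φ (f k) * (if h : (k : ℕ) < m then Δ ⟨(k : ℕ), h⟩ else 1) ∈ Fil 0
      by_cases h : (k : ℕ) < m
      · rw [dif_pos h]; exact hmul 0 0 _ _ (hφ0 _) (hΔ _)
      · rw [dif_neg h]; exact hmul 0 0 _ _ (hφ0 _) h1
    | add x y hx hy =>
      rw [map_add]; exact add_mem hx hy
  | succ p ih =>
    intro B _ _ Fil h1 hmul φ hφ0 hφ Δ hΔ x hx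
    -- data on the dual numbers
    have h1D : (1 : TrivSqZeroExt B B) ∈ filD Fil 0 := by
      rw [mem_filD, TrivSqZeroExt.fst_one, TrivSqZeroExt.snd_one]
      exact ⟨h1, zero_mem _⟩
    have hmulD : ∀ i j : ℕ, ∀ x y : TrivSqZeroExt B B,
        x ∈ filD Fil i → y ∈ filD Fil j → x * y ∈ filD Fil (i + j) := by
      intro i j x y hxm hym
      rw [mem_filD] at hxm hym ⊢
      rw [TrivSqZeroExt.fst_mul, TrivSqZeroExt.snd_mul]
      constructor
      · exact hmul i j _ _ hxm.1 hym.1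
      · simp only [smul_eq_mul, op_smul_eq_mul]
        refine add_mem ?_ ?_
        · exact hmul i (j + 1) _ _ hxm.1 hym.2
        · have : i + 1 + j = i + j + 1 := by omega
          exact this ▸ hmul (i + 1) j _ _ hxm.2 hym.1
    have hφ0D : ∀ a, (phiD R φ) a ∈ filD Fil 0 := by
      intro a
      rw [mem_filD]
      have h1 : TrivSqZeroExt.fst ((phiD R φ) a) = φ a := rfl
      have h2 : TrivSqZeroExt.snd ((phiD R φ) a) = 0 := rfl
      rw [h1, h2]
      exact ⟨hφ0 a, zero_mem _⟩
    have hφD : ∀ (a : A) (q : ℕ), ∀ x ∈ filD Fil q,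
        (phiD R φ) a * x - x * (phiD R φ) a ∈ filD Fil (q + 1) := by
      intro a q x hxm
      rw [mem_filD] at hxm ⊢
      have hD : (phiD R φ) a = inl (φ a) := rfl
      constructor
      · rw [TrivSqZeroExt.fst_sub, TrivSqZeroExt.fst_mul, TrivSqZeroExt.fst_mul, hD,
          TrivSqZeroExt.fst_inl]
        exact hφ a q _ hxm.1
      · rw [TrivSqZeroExt.snd_sub, TrivSqZeroExt.snd_mul, TrivSqZeroExt.snd_mul, hD,
          TrivSqZeroExt.fst_inl, TrivSqZeroExt.snd_inl]
        simp only [smul_eq_mul, op_smul_eq_mul, mul_zero, zero_mul, add_zero, zero_add,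
          smul_zero]
        exact hφ a (q + 1) _ hxm.2
    -- the inductive step
    rw [pow_succ] at hx
    refine Submodule.mul_induction_on hx ?_ (fun u v hu hv => by
      rw [map_add]; exact add_mem hu hv)
    intro z hz y hy
    rw [augIdeal_eq_span] at hy
    induction hy using Submodule.span_induction generalizing z with
    | mem y hymem =>
      obtain ⟨i, a, rfl⟩ := hymem
      have hΔD : ∀ (i : Fin (m + 1)), ∀ j, deltaD Δ i (φ a) j ∈ filD Fil 0 := by
        intro i j
        rw [mem_filD, deltaD, fst_mkE, snd_mkE]
        refine ⟨hΔ j, ?_⟩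
        by_cases hj : (j : ℕ) < (i : ℕ)
        · rw [if_pos hj]
          have := hφ a 0 (Δ j) (hΔ j)
          have h2 : Δ j * φ a - φ a * Δ j = -(φ a * Δ j - Δ j * φ a) := (neg_sub _ _).symm
          rw [h2]
          exact neg_mem this
        · rw [if_neg hj]; exact zero_mem _
      have hi := ih (filD Fil) h1D hmulD (phiD R φ) hφ0D hφD (deltaD Δ i (φ a))
        (hΔD i) z hz
      have h0 := ih (filD Fil) h1D hmulD (phiD R φ) hφ0D hφD (deltaD Δ 0 (φ a))
        (hΔD 0) z hz
      rw [mem_filD] at hi h0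
      have e1 := idKey φ Δ i a z
      have e2 := idKey φ Δ 0 a z
      have hrw : mugen R φ Δ (z * (el R A i a - el R A 0 a))
          = TrivSqZeroExt.snd (mugen R (phiD R φ) (deltaD Δ i (φ a)) z)
            - TrivSqZeroExt.snd (mugen R (phiD R φ) (deltaD Δ 0 (φ a)) z) := by
        rw [e1, e2, sub_sub_sub_cancel_right, mul_sub, mul_comm z, mul_comm z, map_sub]
      rw [hrw]
      exact sub_mem hi.2 h0.2
    | zero =>
      rw [mul_zero, map_zero]; exact zero_mem _
    | add y y' hy hy' ihy ihy' =>
      rw [mul_add, map_add]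
      exact add_mem (ihy z hz) (ihy' z hz)
    | smul r y hy ihy =>
      rw [smul_eq_mul, show z * (r * y) = (z * r) * y by ring]
      exact ihy (z * r) (Ideal.mul_mem_right r _ hz)

end MuProofAux

/-- for a filtered associative `R`-algebra `(B, Fil)` with
`Fil^i · Fil^j ⊆ Fil^{i+j}`, and `φ : A → B` an `R`-algebra map whose left and right
actions agree on the associated graded (`φ(a)x − xφ(a) ∈ Fil^{p+1}` for `x ∈ Fil^p`),
the map `μ_m(−,Δ)` sends the `p`-th power of the augmentation ideal
`I_m ⊆ A^{⊗(m+1)}` into `Fil^p`. -/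
theorem muMap_maps_augIdeal_pow_into_fil
    {R A B : Type*} [CommRing R] [CommRing A] [Algebra R A] [Ring B] [Algebra R B]
    (Fil : ℕ → Submodule R B) (hFil0 : Fil 0 = ⊤)
    (hFil_anti : ∀ i : ℕ, Fil (i + 1) ≤ Fil i)
    (hFil_mul : ∀ i j : ℕ, ∀ x ∈ Fil i, ∀ y ∈ Fil j, x * y ∈ Fil (i + j))
    (φ : A →ₐ[R] B)
    (hφ : ∀ (a : A) (p : ℕ), ∀ x ∈ Fil p, φ a * x - x * φ a ∈ Fil (p + 1))
    (Δ : B) (m : ℕ) (hm : 1 ≤ m) (p : ℕ) :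
    ∀ x ∈ (augIdeal R A m) ^ p, muMap R A B φ Δ m x ∈ Fil p := by
  intro x hx
  have hmu : muMap R A B φ Δ m = MuProofAux.mugen R φ (fun _ : Fin m => Δ) := rfl
  have htop : ∀ b : B, b ∈ Fil 0 := fun b => hFil0 ▸ Submodule.mem_top
  rw [hmu]
  exact MuProofAux.aux m p Fil (htop 1)
    (fun i j x y hx hy => hFil_mul i j x hx y hy) φ (fun a => htop _) hφ
    (fun _ => Δ) (fun _ => htop Δ) x hx
end

section
/- For every Δ ∈ B, every j ≥ 0, every ρ ∈ Fil^j, every m ≥ 1 and every p ≥ 0, the map ν_m(−,Δ,ρ) sends the p-th power of the augmentation ideal I_m ⊆ A^{⊗(m+1)} into Fil^{p+j}: ν_m(I_m^p, Δ, ρ) ⊆ Fil^{p+j}. (This is the ungraded content of the paper's Lemma asserting that ν(−,Δ,ρ) : (DR'(A), F^•) → (B, Fil^{•+j}) is a filtered derivation.) -/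
open scoped TensorProduct
open PiTensorProduct

namespace NuProof
variable (R A B : Type*) [CommRing R] [CommRing A] [Algebra R A] [Ring B] [Algebra R B]

noncomputable def epsHom (m : ℕ) : (⨂[R] _ : Fin (m + 1), A) →ₐ[R] A :=
  PiTensorProduct.liftAlgHom
    (MultilinearMap.mkPiAlgebra R (Fin (m + 1)) A)
    (by simp) (by intro x y; simp [Finset.prod_mul_distrib])

lemma eps_tprod (m : ℕ) (v : Fin (m+1) → A) :
    epsHom R A m (tprod R v) = ∏ t, v t := by
  simp only [epsHom]
  show PiTensorProduct.lift _ (tprod R v) = _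
  simp [lift.tprod]

noncomputable def eta (m : ℕ) (k : Fin (m + 1)) (a : A) : ⨂[R] _ : Fin (m + 1), A :=
  tprod R (Function.update (fun _ => (1 : A)) k a)

lemma eta_add (m : ℕ) (k : Fin (m+1)) (x y : A) :
    eta R A m k (x + y) = eta R A m k x + eta R A m k y := by
  rw [eta, eta, eta]
  exact MultilinearMap.map_update_add (PiTensorProduct.tprod (s := fun _ : Fin (m+1) => A) R) _ k x y

lemma eta_smul (m : ℕ) (k : Fin (m+1)) (r : R) (x : A) :
    eta R A m k (r • x) = r • eta R A m k x := by
  rw [eta, eta]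
  exact MultilinearMap.map_update_smul (PiTensorProduct.tprod (s := fun _ : Fin (m+1) => A) R) _ k r x

lemma eta_zero (m : ℕ) (k : Fin (m+1)) : eta R A m k 0 = 0 := by
  rw [eta]
  exact MultilinearMap.map_update_zero (PiTensorProduct.tprod (s := fun _ : Fin (m+1) => A) R) _ k

lemma eta0_mul (m : ℕ) (x y : A) :
    eta R A m 0 x * eta R A m 0 y = eta R A m 0 (x * y) := by
  rw [eta, eta, eta, tprod_mul_tprod]
  congr 1
  funext t
  rcases eq_or_ne t 0 with rfl | h
  · simp
  · simp [Function.update_of_ne h]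


lemma update_comp_succ {n : ℕ} {α : Sort*} (v : Fin (n+1) → α) (k t : Fin n) (x : α) :
    Function.update v k.succ x t.succ = Function.update (fun s : Fin n => v s.succ) k x t := by
  simp [Function.update_apply, Fin.succ_inj]

lemma move_left {B : Type*} [Ring B] (x y c T : B) (hxc : x * c = c * x) :
    (x * y) * (c * T) = c * ((x * y) * T) + (x * (y * c - c * y)) * T := by
  have h2 : x * y * c = c * (x * y) + x * (y * c - c * y) := by
    calc x * y * c = x * (c * y) + x * (y * c - c * y) := by noncomm_ring
    _ = (x * c) * y + x * (y * c - c * y) := by noncomm_ring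
    _ = (c * x) * y + x * (y * c - c * y) := by rw [hxc]
    _ = c * (x * y) + x * (y * c - c * y) := by noncomm_ring
  calc (x * y) * (c * T) = (x * y * c) * T := by noncomm_ring
  _ = (c * (x * y) + x * (y * c - c * y)) * T := by rw [h2]
  _ = c * ((x * y) * T) + (x * (y * c - c * y)) * T := by noncomm_ring

variable {R A B}

lemma pt_core (φ : A →ₐ[R] B) :
    ∀ (n : ℕ) (v : Fin n → A) (Bf : Fin n → B) (k : Fin n) (a : A),
    (List.ofFn fun t => φ (Function.update v k (a * v k) t) * Bf t).prod
      = φ a * (List.ofFn fun t => φ (v t) * Bf t).prod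
        + ∑ g : Fin n, if (g : ℕ) < (k : ℕ) then
            (List.ofFn fun t => φ (v t)
              * Function.update Bf g (Bf g * φ a - φ a * Bf g) t).prod
          else 0 := by
  intro n
  induction n with
  | zero => exact fun v Bf k => k.elim0
  | succ n ih =>
    intro v Bf k a
    induction k using Fin.cases with
    | zero =>
      rw [Finset.sum_eq_zero (fun g _ => by simp), add_zero,
        List.ofFn_succ, List.ofFn_succ, List.prod_cons, List.prod_cons]
      have htail : (fun t : Fin n =>
          φ (Function.update v 0 (a * v 0) t.succ) * Bf t.succ)
          = fun t : Fin n => φ (v t.succ) * Bf t.succ := by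
        funext t
        rw [Function.update_of_ne (Fin.succ_ne_zero t)]
      rw [htail, Function.update_self, _root_.map_mul]
      simp [mul_assoc]
    | succ k' =>
      have key := ih (fun t => v t.succ) (fun t => Bf t.succ) k' a
      -- LHS head/tail
      rw [List.ofFn_succ, List.prod_cons, List.ofFn_succ, List.prod_cons]
      have hhead : Function.update v k'.succ (a * v k'.succ) 0 = v 0 :=
        Function.update_of_ne (Fin.succ_ne_zero k').symm _ _
      have htail : (fun t : Fin n =>
          φ (Function.update v k'.succ (a * v k'.succ) t.succ) * Bf t.succ)
          = fun t : Fin n =>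
            φ (Function.update (fun s : Fin n => v s.succ) k'
                (a * (fun s : Fin n => v s.succ) k') t) * (fun s : Fin n => Bf s.succ) t := by
        funext t
        rw [update_comp_succ]
      rw [hhead, htail, key]
      -- RHS sum
      rw [Fin.sum_univ_succ]
      have hterm0 : (if ((0 : Fin (n+1)) : ℕ) < ((k'.succ : Fin (n+1)) : ℕ) then
          (List.ofFn fun t : Fin (n+1) => φ (v t)
            * Function.update Bf 0 (Bf 0 * φ a - φ a * Bf 0) t).prod else 0)
          = (φ (v 0) * (Bf 0 * φ a - φ a * Bf 0))
              * (List.ofFn fun t : Fin n => φ (v t.succ) * Bf t.succ).prod := by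
        rw [if_pos (by simp)]
        rw [List.ofFn_succ, List.prod_cons, Function.update_self]
        have htl : (fun t : Fin n => φ (v t.succ)
            * Function.update Bf 0 (Bf 0 * φ a - φ a * Bf 0) t.succ)
            = fun t : Fin n => φ (v t.succ) * Bf t.succ := by
          funext t
          rw [Function.update_of_ne (Fin.succ_ne_zero t)]
        rw [htl]
      have hterms : ∀ g : Fin n, (if ((g.succ : Fin (n+1)) : ℕ) < ((k'.succ : Fin (n+1)) : ℕ) then
          (List.ofFn fun t : Fin (n+1) => φ (v t)
            * Function.update Bf g.succ (Bf g.succ * φ a - φ a * Bf g.succ) t).prod else 0)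
          = (φ (v 0) * Bf 0) * (if ((g : ℕ) < (k' : ℕ)) then
              (List.ofFn fun t : Fin n => φ ((fun s : Fin n => v s.succ) t)
                * Function.update (fun s : Fin n => Bf s.succ) g
                  ((fun s : Fin n => Bf s.succ) g * φ a
                    - φ a * (fun s : Fin n => Bf s.succ) g) t).prod else 0) := by
        intro g
        by_cases h : (g : ℕ) < (k' : ℕ)
        · rw [if_pos (by simpa using Nat.succ_lt_succ h), if_pos h,
            List.ofFn_succ, List.prod_cons,
            Function.update_of_ne (Fin.succ_ne_zero g).symm]
          have htl : (fun t : Fin n => φ (v t.succ)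
              * Function.update Bf g.succ (Bf g.succ * φ a - φ a * Bf g.succ) t.succ)
              = fun t : Fin n => φ ((fun s : Fin n => v s.succ) t)
                * Function.update (fun s : Fin n => Bf s.succ) g
                  ((fun s : Fin n => Bf s.succ) g * φ a
                    - φ a * (fun s : Fin n => Bf s.succ) g) t := by
            funext t
            rw [update_comp_succ]
          rw [htl]
        · rw [if_neg (by simpa using fun hh => h (Nat.lt_of_succ_lt_succ hh)), if_neg h, mul_zero]
      rw [hterm0, Finset.sum_congr rfl (fun g _ => hterms g), ← Finset.mul_sum]
      rw [mul_add]
      rw [move_left (φ (v 0)) (Bf 0) (φ a) _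
        (by rw [← _root_.map_mul, ← _root_.map_mul, mul_comm])]
      abel

noncomputable def Bext (m : ℕ) (β : Fin m → B) : Fin (m + 1) → B :=
  fun t => if h : (t : ℕ) < m then β ⟨t, h⟩ else 1

noncomputable def Wmap (φ : A →ₐ[R] B) (m : ℕ) (β : Fin m → B) :
    (⨂[R] _ : Fin (m + 1), A) →ₗ[R] B :=
  PiTensorProduct.lift
    ((MultilinearMap.mkPiAlgebraFin R (m + 1) B).compLinearMap
      (fun t => (LinearMap.mulRight R (Bext m β t)).comp φ.toLinearMap))

lemma Wmap_tprod (φ : A →ₐ[R] B) (m : ℕ) (β : Fin m → B) (v : Fin (m+1) → A) :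
    Wmap φ m β (tprod R v) = (List.ofFn fun t => φ (v t) * Bext m β t).prod := by
  simp [Wmap, MultilinearMap.mkPiAlgebraFin_apply]

lemma Bext_castSucc (m : ℕ) (β : Fin m → B) (g : Fin m) :
    Bext m β g.castSucc = β g := by
  have h : ((g.castSucc : Fin (m+1)) : ℕ) < m := by simpa using g.isLt
  rw [Bext, dif_pos h]
  exact congrArg β (Fin.ext (by first | rfl | simp))

lemma Bext_update (m : ℕ) (β : Fin m → B) (g : Fin m) (c : B) :
    Bext m (Function.update β g c) = Function.update (Bext m β) g.castSucc c := by
  funext t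
  rcases eq_or_ne t g.castSucc with rfl | h
  · rw [Function.update_self]
    have h1 : ((g.castSucc : Fin (m+1)) : ℕ) < m := by simpa using g.isLt
    rw [Bext, dif_pos h1]
    have : (⟨(g.castSucc : Fin (m+1)), h1⟩ : Fin m) = g := Fin.ext (by first | rfl | simp)
    rw [this, Function.update_self]
  · rw [Function.update_of_ne h, Bext, Bext]
    by_cases h2 : (t : ℕ) < m
    · rw [dif_pos h2, dif_pos h2, Function.update_of_ne]
      intro hc
      exact h (Fin.ext (by simpa using congrArg Fin.val hc))
    · rw [dif_neg h2, dif_neg h2]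

lemma eta_mul_tprod (m : ℕ) (k : Fin (m+1)) (a : A) (v : Fin (m+1) → A) :
    eta R A m k a * tprod R v = tprod R (Function.update v k (a * v k)) := by
  rw [eta, tprod_mul_tprod]
  congr 1
  funext t
  rcases eq_or_ne t k with rfl | h
  · simp
  · simp [Function.update_of_ne h]

lemma W_eta_mul_tprod (φ : A →ₐ[R] B) (m : ℕ) (β : Fin m → B) (k : Fin (m+1)) (a : A)
    (v : Fin (m+1) → A) :
    Wmap φ m β (eta R A m k a * tprod R v)
      = φ a * Wmap φ m β (tprod R v)
        + ∑ g : Fin m, if (g : ℕ) < (k : ℕ) then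
            Wmap φ m (Function.update β g (β g * φ a - φ a * β g)) (tprod R v) else 0 := by
  rw [eta_mul_tprod, Wmap_tprod, Wmap_tprod,
    pt_core φ (m+1) v (Bext m β) k a]
  congr 1
  rw [Fin.sum_univ_castSucc]
  have hlast : (if ((Fin.last m : Fin (m+1)) : ℕ) < (k : ℕ) then
      (List.ofFn fun t => φ (v t) * Function.update (Bext m β) (Fin.last m)
        (Bext m β (Fin.last m) * φ a - φ a * Bext m β (Fin.last m)) t).prod else 0) = 0 := by
    rw [if_neg]
    simpa using Nat.not_lt.mpr (Fin.is_le k)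
  rw [hlast, add_zero]
  refine Finset.sum_congr rfl fun g _ => ?_
  rw [Fin.coe_castSucc, Bext_castSucc, ← Bext_update, Wmap_tprod]

lemma W_eta_mul (φ : A →ₐ[R] B) (m : ℕ) (β : Fin m → B) (k : Fin (m+1)) (a : A)
    (y : ⨂[R] _ : Fin (m+1), A) :
    Wmap φ m β (eta R A m k a * y)
      = φ a * Wmap φ m β y
        + ∑ g : Fin m, if (g : ℕ) < (k : ℕ) then
            Wmap φ m (Function.update β g (β g * φ a - φ a * β g)) y else 0 := by
  induction y using PiTensorProduct.induction_on with
  | smul_tprod r v =>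
    rw [mul_smul_comm, map_smul, W_eta_mul_tprod, smul_add, Finset.smul_sum]
    congr 1
    · rw [map_smul, mul_smul_comm]
    · refine Finset.sum_congr rfl fun g _ => ?_
      rw [map_smul]
      split_ifs <;> simp
  | add x y hx hy =>
    rw [mul_add, map_add, hx, hy, map_add, mul_add]
    have hsum : (∑ g : Fin m, if (g : ℕ) < (k : ℕ) then
          Wmap φ m (Function.update β g (β g * φ a - φ a * β g)) (x + y) else 0)
        = (∑ g : Fin m, if (g : ℕ) < (k : ℕ) then
            Wmap φ m (Function.update β g (β g * φ a - φ a * β g)) x else 0)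
          + (∑ g : Fin m, if (g : ℕ) < (k : ℕ) then
            Wmap φ m (Function.update β g (β g * φ a - φ a * β g)) y else 0) := by
      rw [← Finset.sum_add_distrib]
      refine Finset.sum_congr rfl fun g _ => ?_
      rw [map_add]
      split_ifs <;> simp
    rw [hsum]
    abel

lemma augIdeal_eq (m : ℕ) :
    augIdeal R A m = RingHom.ker (epsHom R A m).toRingHom := rfl

lemma augIdeal_le_span (m : ℕ) :
    augIdeal R A m
      ≤ Ideal.span {x | ∃ (k : Fin (m+1)) (a : A), x = eta R A m k a - eta R A m 0 a} := by
  set J := Ideal.span {x | ∃ (k : Fin (m+1)) (a : A), x = eta R A m k a - eta R A m 0 a} with hJ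
  have pure : ∀ (K : ℕ) (v : Fin (m+1) → A), (∀ t : Fin (m+1), K ≤ (t : ℕ) → v t = 1) →
      tprod R v - eta R A m 0 (∏ t, v t) ∈ J := by
    intro K
    induction K with
    | zero =>
      intro v hv
      have hv1 : v = fun _ => 1 := funext fun t => hv t (Nat.zero_le _)
      subst hv1
      have h1 : (∏ t : Fin (m+1), (1 : A)) = 1 := Finset.prod_const_one
      rw [h1, eta, Function.update_eq_self]
      simp
    | succ K ihK =>
      intro v hv
      by_cases hK : K < m + 1
      · set Kf : Fin (m+1) := ⟨K, hK⟩ with hKf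
        set v' := Function.update v Kf 1 with hv'def
        have hsplit : tprod R v = eta R A m Kf (v Kf) * tprod R v' := by
          rw [eta, tprod_mul_tprod]
          congr 1
          funext t
          rcases eq_or_ne t Kf with rfl | h
          · simp [hv'def]
          · simp [hv'def, Function.update_of_ne h]
        have hy' : tprod R v' - eta R A m 0 (∏ t, v' t) ∈ J := by
          refine ihK v' fun t ht => ?_
          rcases eq_or_ne t Kf with rfl | h
          · simp [hv'def]
          · rw [hv'def, Function.update_of_ne h]
            refine hv t ?_
            have : (t : ℕ) ≠ K := fun hval => h (Fin.ext (by rw [hval]))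
            omega
        have hgen : eta R A m Kf (v Kf) - eta R A m 0 (v Kf) ∈ J :=
          Ideal.subset_span ⟨Kf, v Kf, rfl⟩
        have hprod : v Kf * ∏ t, v' t = ∏ t, v t := by
          rw [hv'def, Finset.prod_update_of_mem (Finset.mem_univ Kf), one_mul,
            Finset.sdiff_singleton_eq_erase, Finset.mul_prod_erase _ _ (Finset.mem_univ Kf)]
        have hcalc : tprod R v - eta R A m 0 (∏ t, v t)
            = (eta R A m Kf (v Kf) - eta R A m 0 (v Kf)) * tprod R v'
              + eta R A m 0 (v Kf) * (tprod R v' - eta R A m 0 (∏ t, v' t)) := by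
          rw [hsplit, ← hprod, ← eta0_mul]
          ring
        rw [hcalc]
        exact add_mem (Ideal.mul_mem_right _ _ hgen) (Ideal.mul_mem_left _ _ hy')
      · refine ihK v fun t ht => ?_
        exact absurd ht (by have := t.isLt; omega)
  have key : ∀ x : ⨂[R] _ : Fin (m+1), A, x - eta R A m 0 (epsHom R A m x) ∈ J := by
    intro x
    induction x using PiTensorProduct.induction_on with
    | smul_tprod r v =>
      have h := pure (m+1) v (fun t ht => absurd ht (by have := t.isLt; omega))
      have hrw : (r • tprod R v) - eta R A m 0 (epsHom R A m (r • tprod R v))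
          = r • (tprod R v - eta R A m 0 (∏ t, v t)) := by
        rw [map_smul, eps_tprod, smul_sub, eta_smul]
      rw [hrw]
      exact Submodule.smul_of_tower_mem J r h
    | add x y hx hy =>
      have hrw : (x + y) - eta R A m 0 (epsHom R A m (x + y))
          = (x - eta R A m 0 (epsHom R A m x)) + (y - eta R A m 0 (epsHom R A m y)) := by
        rw [map_add, eta_add]
        ring
      rw [hrw]
      exact add_mem hx hy
  intro x hx
  have hx0 : epsHom R A m x = 0 := by
    rw [augIdeal_eq] at hx
    exact RingHom.mem_ker.mp hx
  have hk := key x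
  rw [hx0, eta_zero, sub_zero] at hk
  exact hk

lemma pow_succ_le (m p : ℕ) :
    ∀ x ∈ (augIdeal R A m) ^ (p + 1),
      x ∈ Submodule.span R {x | ∃ (k : Fin (m+1)) (a : A)
          (y : ⨂[R] _ : Fin (m+1), A), y ∈ (augIdeal R A m) ^ p
            ∧ x = (eta R A m k a - eta R A m 0 a) * y} := by
  set N := Submodule.span R {x | ∃ (k : Fin (m+1)) (a : A)
      (y : ⨂[R] _ : Fin (m+1), A), y ∈ (augIdeal R A m) ^ p
        ∧ x = (eta R A m k a - eta R A m 0 a) * y} with hN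
  have hNmul : ∀ (t : ⨂[R] _ : Fin (m+1), A), ∀ u ∈ N, t * u ∈ N := by
    intro t u hu
    refine Submodule.span_induction ?_ ?_ ?_ ?_ hu
    · rintro z ⟨k, a, y, hy, rfl⟩
      refine Submodule.subset_span ⟨k, a, t * y, Ideal.mul_mem_left _ _ hy, ?_⟩
      ring
    · rw [mul_zero]; exact zero_mem _
    · intro u w _ _ hu hw
      rw [mul_add]; exact add_mem hu hw
    · intro r u _ hu
      rw [mul_smul_comm]; exact Submodule.smul_mem _ _ hu
  intro z hz
  rw [pow_succ] at hz
  refine Submodule.mul_induction_on hz (fun x hx d hd => ?_) (fun u w hu hw => add_mem hu hw)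
  have hd' := augIdeal_le_span m hd
  refine Submodule.span_induction ?_ ?_ ?_ ?_ hd'
  · rintro z ⟨k, a, rfl⟩
    exact Submodule.subset_span ⟨k, a, x, hx, mul_comm x _⟩
  · rw [mul_zero]; exact zero_mem _
  · intro u w _ _ hu hw
    rw [mul_add]; exact add_mem hu hw
  · intro t u _ hu
    have : x * (t • u) = t * (x * u) := by
      rw [smul_eq_mul]; ring
    rw [this]
    exact hNmul t _ hu

lemma prod_mem_fil (Fil : ℕ → Submodule R B) (hFil0 : Fil 0 = ⊤)
    (hFil_mul : ∀ i j : ℕ, ∀ x ∈ Fil i, ∀ y ∈ Fil j, x * y ∈ Fil (i + j)) :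
    ∀ (n : ℕ) (f : Fin n → B) (q : Fin n → ℕ), (∀ t, f t ∈ Fil (q t)) →
      (List.ofFn f).prod ∈ Fil (∑ t, q t) := by
  intro n
  induction n with
  | zero =>
    intro f q h
    simp only [List.ofFn_zero, List.prod_nil, Fin.sum_univ_zero]
    rw [hFil0]; trivial
  | succ n ih =>
    intro f q h
    rw [List.ofFn_succ, List.prod_cons, Fin.sum_univ_succ]
    exact hFil_mul _ _ _ (h 0) _ (ih _ _ fun t => h t.succ)

lemma W_mem_fil (Fil : ℕ → Submodule R B) (hFil0 : Fil 0 = ⊤)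
    (hFil_mul : ∀ i j : ℕ, ∀ x ∈ Fil i, ∀ y ∈ Fil j, x * y ∈ Fil (i + j))
    (φ : A →ₐ[R] B)
    (hφ : ∀ (a : A) (p : ℕ), ∀ x ∈ Fil p, φ a * x - x * φ a ∈ Fil (p + 1))
    (m : ℕ) :
    ∀ (p : ℕ) (β : Fin m → B) (jb : Fin m → ℕ), (∀ g, β g ∈ Fil (jb g)) →
      ∀ x ∈ (augIdeal R A m) ^ p, Wmap φ m β x ∈ Fil (p + ∑ g, jb g) := by
  intro p
  induction p with
  | zero =>
    intro β jb hβ x hx0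
    clear hx0
    rw [zero_add]
    induction x using PiTensorProduct.induction_on with
    | smul_tprod r v =>
      rw [map_smul]
      refine Submodule.smul_mem _ _ ?_
      rw [Wmap_tprod]
      have hq : ∀ t : Fin (m+1), φ (v t) * Bext m β t
          ∈ Fil (if h : (t : ℕ) < m then jb ⟨t, h⟩ else 0) := by
        intro t
        have hφv : φ (v t) ∈ Fil 0 := by rw [hFil0]; trivial
        by_cases h : (t : ℕ) < m
        · rw [dif_pos h]
          have hB : Bext m β t = β ⟨t, h⟩ := dif_pos h
          have hBmem : Bext m β t ∈ Fil (jb ⟨t, h⟩) := by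
            rw [hB]; exact hβ ⟨t, h⟩
          have := hFil_mul 0 (jb ⟨t, h⟩) _ hφv _ hBmem
          rwa [zero_add] at this
        · rw [dif_neg h]
          have h1 : Bext m β t ∈ Fil 0 := by rw [hFil0]; trivial
          have := hFil_mul 0 0 _ hφv _ h1
          rwa [zero_add] at this
      have hsum : (∑ t : Fin (m+1), if h : (t : ℕ) < m then jb ⟨t, h⟩ else 0)
          = ∑ g : Fin m, jb g := by
        rw [Fin.sum_univ_castSucc,
          dif_neg (by simp : ¬ ((Fin.last m : Fin (m+1)) : ℕ) < m), add_zero]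
        refine Finset.sum_congr rfl fun g _ => ?_
        have h : ((g.castSucc : Fin (m+1)) : ℕ) < m := by simpa using g.isLt
        rw [dif_pos h]
        exact congrArg jb (Fin.ext (by first | rfl | simp))
      rw [← hsum]
      exact prod_mem_fil Fil hFil0 hFil_mul (m+1) _ _ hq
    | add x y hx hy =>
      rw [map_add]
      exact add_mem hx hy
  | succ p ih =>
    intro β jb hβ x hx
    have hx' := pow_succ_le m p x hx
    refine Submodule.span_induction ?_ ?_ ?_ ?_ hx'
    · rintro z ⟨k, a, y, hy, rfl⟩
      rw [sub_mul, map_sub, W_eta_mul, W_eta_mul]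
      have h0 : (∑ g : Fin m, if (g : ℕ) < ((0 : Fin (m+1)) : ℕ) then
          Wmap φ m (Function.update β g (β g * φ a - φ a * β g)) y else 0) = 0 :=
        Finset.sum_eq_zero fun g _ => by simp
      rw [h0, add_zero, add_sub_cancel_left]
      refine Submodule.sum_mem _ fun g _ => ?_
      split_ifs with hg
      · have hc : β g * φ a - φ a * β g ∈ Fil (jb g + 1) := by
          have h1 := hφ a (jb g) (β g) (hβ g)
          rw [(neg_sub (φ a * β g) (β g * φ a)).symm]
          exact neg_mem h1
        have hβ' : ∀ g', Function.update β g (β g * φ a - φ a * β g) g'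
            ∈ Fil (Function.update jb g (jb g + 1) g') := by
          intro g'
          rcases eq_or_ne g' g with rfl | h
          · rw [Function.update_self, Function.update_self]
            exact hc
          · rw [Function.update_of_ne h, Function.update_of_ne h]
            exact hβ g'
        have hsum : p + ∑ g', Function.update jb g (jb g + 1) g'
            = p + 1 + ∑ g', jb g' := by
          have e1 : (∑ g', Function.update jb g (jb g + 1) g')
              = (jb g + 1) + ∑ g' ∈ Finset.univ.erase g, jb g' := by
            rw [Finset.sum_update_of_mem (Finset.mem_univ g),
              Finset.sdiff_singleton_eq_erase]
          have e2 : (∑ g' : Fin m, jb g')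
              = jb g + ∑ g' ∈ Finset.univ.erase g, jb g' :=
            (Finset.add_sum_erase _ jb (Finset.mem_univ g)).symm
          rw [e1, e2]
          omega
        exact hsum ▸ ih (Function.update β g (β g * φ a - φ a * β g))
          (Function.update jb g (jb g + 1)) hβ' y hy
      · exact zero_mem _
    · rw [map_zero]; exact zero_mem _
    · intro u w _ _ hu hw
      rw [map_add]; exact add_mem hu hw
    · intro r u _ hu
      rw [map_smul]; exact Submodule.smul_mem _ _ hu
end NuProof

/-- in the filtered setting of the paper's Lemma, for `ρ ∈ Fil^j` the
map `ν_m(−,Δ,ρ)` sends the `p`-th power of the augmentation ideal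
`I_m ⊆ A^{⊗(m+1)}` into `Fil^{p+j}`. -/
theorem nuMap_maps_augIdeal_pow_into_fil
    {R A B : Type*} [CommRing R] [CommRing A] [Algebra R A] [Ring B] [Algebra R B]
    (Fil : ℕ → Submodule R B) (hFil0 : Fil 0 = ⊤)
    (hFil_anti : ∀ i : ℕ, Fil (i + 1) ≤ Fil i)
    (hFil_mul : ∀ i j : ℕ, ∀ x ∈ Fil i, ∀ y ∈ Fil j, x * y ∈ Fil (i + j))
    (φ : A →ₐ[R] B)
    (hφ : ∀ (a : A) (p : ℕ), ∀ x ∈ Fil p, φ a * x - x * φ a ∈ Fil (p + 1))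
    (Δ : B) (j : ℕ) (ρ : B) (hρ : ρ ∈ Fil j)
    (m : ℕ) (hm : 1 ≤ m) (p : ℕ) :
    ∀ x ∈ (augIdeal R A m) ^ p, nuMap R A B φ Δ ρ m x ∈ Fil (p + j) := by
  intro x hx
  have hrw : nuMap R A B φ Δ ρ m x
      = ∑ i ∈ Finset.range m,
          NuProof.Wmap φ m (fun g : Fin m => if (g : ℕ) = i then ρ else Δ) x := by
    rw [nuMap, LinearMap.sum_apply]
    refine Finset.sum_congr rfl fun i hi => ?_
    have him : i < m := Finset.mem_range.mp hi
    have hfun : (fun t : Fin (m+1) => (LinearMap.mulRight R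
          (if (t : ℕ) = i then ρ else if (t : ℕ) < m then Δ else 1)).comp φ.toLinearMap)
        = fun t : Fin (m+1) => (LinearMap.mulRight R
            (NuProof.Bext m (fun g : Fin m => if (g : ℕ) = i then ρ else Δ) t)).comp
              φ.toLinearMap := by
      funext t
      congr 1
      by_cases h : (t : ℕ) < m
      · have hB : NuProof.Bext m (fun g : Fin m => if (g : ℕ) = i then ρ else Δ) t
            = if (t : ℕ) = i then ρ else Δ := dif_pos h
        rw [hB]
        by_cases hti : (t : ℕ) = i
        · rw [if_pos hti, if_pos hti]
        · rw [if_neg hti, if_neg hti, if_pos h]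
      · have hB : NuProof.Bext m (fun g : Fin m => if (g : ℕ) = i then ρ else Δ) t
            = 1 := dif_neg h
        rw [hB]
        have hti : ¬ (t : ℕ) = i := by omega
        rw [if_neg hti, if_neg h]
    rw [NuProof.Wmap, hfun]
  rw [hrw]
  refine Submodule.sum_mem _ fun i hi => ?_
  have him : i < m := Finset.mem_range.mp hi
  have hmem : ∀ g : Fin m, (if (g : ℕ) = i then ρ else Δ)
      ∈ Fil (if (g : ℕ) = i then j else 0) := by
    intro g
    by_cases h : (g : ℕ) = i
    · rw [if_pos h, if_pos h]; exact hρ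
    · rw [if_neg h, if_neg h, hFil0]; trivial
  have hsum : (∑ g : Fin m, if (g : ℕ) = i then j else 0) = j := by
    rw [Finset.sum_eq_single (⟨i, him⟩ : Fin m)]
    · rw [if_pos rfl]
    · intro g _ hg
      exact if_neg fun h => hg (Fin.ext h)
    · intro h
      exact absurd (Finset.mem_univ _) h
  have := NuProof.W_mem_fil Fil hFil0 hFil_mul φ hφ m p
    (fun g : Fin m => if (g : ℕ) = i then ρ else Δ)
    (fun g : Fin m => if (g : ℕ) = i then j else 0) hmem x hx
  rwa [hsum] at this
end
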